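/- arXiv:math/0607646 — 3 statements merged into one kernel-verified Lean document; each statement's English description precedes it below -/
import Mathlib

section
/- A functor p : C → D is a retract equivalence (i.e. there exists g : D → C with p ∘ g = 1_D and a natural isomorphism g ∘ p ≅ 1_C) if and only if p is both an equivalence of categories and an isofibration. -/
open CategoryTheory

universe v₁ v₂ u₁ u₂

/-- A functor is an isofibration if isomorphisms lift strictly on one endpoint. -/
def IsIsofibration {E : Type u₁} {B : Type u₂} [Category.{v₁} E] [Category.{v₂} B]
    (p : E ⥤ B) : Prop :=
  ∀ (e : E) (b : B) (β : b ≅ p.obj e),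
    ∃ (e' : E) (ε : e' ≅ e) (h : p.obj e' = b), p.map ε.hom = eqToHom h ≫ β.hom

/-- A functor `p : C ⥤ D` is a retract equivalence (it has a strict section `g`
with `p ∘ g = 1` and `g ∘ p ≅ 1`) iff it is an equivalence of categories and an
isofibration. -/
theorem retract_equivalence_iff_equivalence_and_isofibration
    {C : Type u₁} {D : Type u₂} [Category.{v₁} C] [Category.{v₂} D] (p : C ⥤ D) :
    (∃ g : D ⥤ C, g ⋙ p = 𝟭 D ∧ Nonempty (p ⋙ g ≅ 𝟭 C)) ↔
      (p.IsEquivalence ∧ IsIsofibration p) := by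
  constructor
  · rintro ⟨g, hg, ⟨η⟩⟩
    haveI hpe : p.IsEquivalence :=
      Equivalence.isEquivalence_functor (CategoryTheory.Equivalence.mk p g η.symm (eqToIso hg))
    refine ⟨hpe, ?_⟩
    intro c b β
    have h : p.obj (g.obj b) = b := Functor.congr_obj hg b
    have hi : IsIso (p.preimage (eqToHom h ≫ β.hom)) := by
      have : IsIso (p.map (p.preimage (eqToHom h ≫ β.hom))) := by
        rw [p.map_preimage]; infer_instance
      exact isIso_of_reflects_iso _ p
    exact ⟨g.obj b, asIso (p.preimage (eqToHom h ≫ β.hom)), h, p.map_preimage _⟩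
  · rintro ⟨hpe, hiso⟩
    haveI := hpe
    set e := p.asEquivalence with he
    choose obj iso h fac using fun d => hiso (e.inverse.obj d) d (e.counitIso.app d).symm
    have fac' : ∀ d, p.map (iso d).inv = (e.counitIso.app d).hom ≫ eqToHom (h d).symm := by
      intro d
      apply (cancel_epi (p.map (iso d).hom)).1
      rw [← p.map_comp, Iso.hom_inv_id, p.map_id, fac]
      show 𝟙 _ = (eqToHom (h d) ≫ e.counitIso.inv.app d) ≫ e.counitIso.hom.app d ≫ eqToHom (h d).symm
      simp
    refine ⟨{ obj := obj,
              map := fun {d d'} f => (iso d).hom ≫ e.inverse.map f ≫ (iso d').inv,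
              map_id := by intros; simp
              map_comp := by intros; simp }, ?_, ⟨?_⟩⟩
    · refine CategoryTheory.Functor.ext h ?_
      intro d d' f
      simp only [Functor.comp_map, Functor.id_map, Functor.map_comp, fac, fac']
      have hnat := e.counitIso.hom.naturality f
      simp only [Functor.comp_map, Functor.asEquivalence_functor, Functor.id_map] at hnat
      have hnat' : p.map (e.inverse.map f) ≫ e.counitIso.hom.app d' =
          e.counitIso.hom.app d ≫ f := hnat
      simp only [Iso.symm_hom, Iso.app_inv, Iso.app_hom, Category.assoc]
      show (eqToHom (h d) ≫ e.counitIso.inv.app d) ≫ e.functor.map (e.inverse.map f) ≫ e.counitIso.hom.app d' ≫ eqToHom (h d').symm = _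
      rw [reassoc_of% hnat]
      simp
    · refine NatIso.ofComponents (fun c => iso (p.obj c) ≪≫ (e.unitIso.app c).symm) ?_
      intro c c' f
      simp only [Functor.comp_map, Functor.id_map, Iso.trans_hom, Iso.symm_hom,
        Category.assoc]
      show (iso (e.functor.obj c)).hom ≫ e.inverse.map (e.functor.map f) ≫ (iso (e.functor.obj c')).inv ≫ (iso (e.functor.obj c')).hom ≫ e.unitIso.inv.app c' = ((iso (e.functor.obj c)).hom ≫ e.unitIso.inv.app c) ≫ f
      simp
end

section
/- Retract equivalences of categories are stable under pullback: if p : E → B admits a section s with p ∘ s = 1_B and s ∘ p ≅ 1_E, and f : B' → B is any functor, then the pullback projection E ×_B B' → B' also admits a section s' with a natural isomorphism witnessing it as a retract equivalence. -/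
open CategoryTheory

universe v₁ v₂ v₃ u₁ u₂ u₃

/-- The strict pullback `E ×_B B'` of functors `p : E ⥤ B` and `f : B' ⥤ B`:
objects are pairs `(e, b')` with `p e = f b'`. -/
structure CatPullback {E : Type u₁} {B : Type u₂} {B' : Type u₃}
    [Category.{v₁} E] [Category.{v₂} B] [Category.{v₃} B']
    (p : E ⥤ B) (f : B' ⥤ B) where
  e : E
  b' : B'
  h : p.obj e = f.obj b'

namespace CatPullback

variable {E : Type u₁} {B : Type u₂} {B' : Type u₃}
  [Category.{v₁} E] [Category.{v₂} B] [Category.{v₃} B']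
  {p : E ⥤ B} {f : B' ⥤ B}

/-- Morphisms in the strict pullback: pairs of morphisms agreeing under `p` and `f`. -/
@[ext]
structure Hom (X Y : CatPullback p f) where
  he : X.e ⟶ Y.e
  hb : X.b' ⟶ Y.b'
  w : p.map he = eqToHom X.h ≫ f.map hb ≫ eqToHom Y.h.symm := by aesop_cat

attribute [simp] Hom.w

instance : Category (CatPullback p f) where
  Hom := Hom
  id X := ⟨𝟙 _, 𝟙 _, by simp⟩
  comp g h := ⟨g.he ≫ h.he, g.hb ≫ h.hb, by simp⟩

variable (p f)

/-- The projection `E ×_B B' ⥤ B'`. -/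
def proj : CatPullback p f ⥤ B' where
  obj X := X.b'
  map g := g.hb

end CatPullback


/-- From a strict retraction `s ⋙ p = 𝟭 B` and any iso `p ⋙ s ≅ 𝟭 E`, produce a
"vertical" iso, whose components are sent by `p` to `eqToHom`s. -/
theorem exists_vertical_iso
    {E : Type u₁} {B : Type u₂}
    [Category.{v₁} E] [Category.{v₂} B]
    (p : E ⥤ B) (s : B ⥤ E)
    (hs : s ⋙ p = 𝟭 B) (hsp : Nonempty (p ⋙ s ≅ 𝟭 E)) :
    ∃ θ : p ⋙ s ≅ 𝟭 E, ∀ e : E,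
      p.map (θ.hom.app e) = eqToHom (Functor.congr_obj hs (p.obj e)) := by
  obtain ⟨η⟩ := hsp
  -- the "defect" automorphism of `p.obj e`
  let a : ∀ e : E, p.obj e ≅ p.obj e := fun e =>
    eqToIso (Functor.congr_obj hs (p.obj e)).symm ≪≫ p.mapIso (η.app e)
  have ha : ∀ {e e' : E} (g : e ⟶ e'), (a e).hom ≫ p.map g = p.map g ≫ (a e').hom := by
    intro e e' g
    have hnat := congrArg p.map (η.hom.naturality g)
    simp only [Functor.map_comp, Functor.comp_map, Functor.id_map] at hnat
    have hps := Functor.congr_hom hs (p.map g)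
    simp only [Functor.comp_map] at hps
    rw [hps] at hnat
    simp only [a, Iso.trans_hom, eqToIso.hom, Functor.mapIso_hom, Iso.app_hom, Category.assoc]
    rw [← hnat]
    simp
  have hcomm : ∀ {e e' : E} (g : e ⟶ e'), p.map g ≫ (a e').inv = (a e).inv ≫ p.map g := by
    intro e e' g
    rw [Iso.comp_inv_eq, Category.assoc, ← ha g, Iso.inv_hom_id_assoc]
  refine ⟨NatIso.ofComponents
    (fun e => s.mapIso (a e).symm ≪≫ η.app e) ?_, ?_⟩
  · intro e e' g
    have hnat := η.hom.naturality g
    simp only [Functor.comp_map, Functor.id_map] at hnat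
    simp only [Iso.trans_hom, Functor.mapIso_hom, Iso.symm_hom, Iso.app_hom,
      Functor.comp_map, Functor.id_map]
    rw [← Category.assoc, ← s.map_comp, hcomm g, s.map_comp, Category.assoc, hnat,
      Category.assoc]
  · intro e
    simp only [NatIso.ofComponents_hom_app, Iso.trans_hom, Functor.mapIso_hom, Iso.symm_hom,
      Iso.app_hom, Functor.map_comp]
    have hps : p.map (s.map (a e).inv) =
        eqToHom (Functor.congr_obj hs (p.obj e)) ≫ (a e).inv ≫
          eqToHom (Functor.congr_obj hs (p.obj e)).symm :=
      Functor.congr_hom hs (a e).inv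
    rw [hps]
    simp only [a, Iso.trans_inv, eqToIso.inv, Functor.mapIso_inv, Iso.app_inv,
      Category.assoc, eqToHom_trans_assoc, eqToHom_refl, Category.id_comp]
    rw [← p.map_comp, Iso.inv_hom_id_app]
    simp

namespace CatPullback
variable {E : Type u₁} {B : Type u₂} {B' : Type u₃}
  [Category.{v₁} E] [Category.{v₂} B] [Category.{v₃} B']
  {p : E ⥤ B} {f : B' ⥤ B}

@[simp] theorem id_he (X : CatPullback p f) : (𝟙 X : X ⟶ X).he = 𝟙 X.e := rfl
@[simp] theorem id_hb (X : CatPullback p f) : (𝟙 X : X ⟶ X).hb = 𝟙 X.b' := rfl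
@[simp] theorem comp_he {X Y Z : CatPullback p f} (g : X ⟶ Y) (h : Y ⟶ Z) :
    (g ≫ h).he = g.he ≫ h.he := rfl
@[simp] theorem comp_hb {X Y Z : CatPullback p f} (g : X ⟶ Y) (h : Y ⟶ Z) :
    (g ≫ h).hb = g.hb ≫ h.hb := rfl

theorem hom_ext {X Y : CatPullback p f} {g h : X ⟶ Y}
    (H1 : g.he = h.he) (H2 : g.hb = h.hb) : g = h := Hom.ext H1 H2

end CatPullback

/-- Retract equivalences of categories are stable under pullback. -/
theorem retract_equivalence_pullback_stable
    {E : Type u₁} {B : Type u₂} {B' : Type u₃}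
    [Category.{v₁} E] [Category.{v₂} B] [Category.{v₃} B']
    (p : E ⥤ B) (f : B' ⥤ B) (s : B ⥤ E)
    (hs : s ⋙ p = 𝟭 B) (hsp : Nonempty (p ⋙ s ≅ 𝟭 E)) :
    ∃ s' : B' ⥤ CatPullback p f, s' ⋙ CatPullback.proj p f = 𝟭 B' ∧
      Nonempty (CatPullback.proj p f ⋙ s' ≅ 𝟭 (CatPullback p f)) := by
  obtain ⟨θ, hθ⟩ := exists_vertical_iso p s hs hsp
  have hθinv : ∀ e : E, p.map (θ.inv.app e) =
      eqToHom (Functor.congr_obj hs (p.obj e)).symm := by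
    intro e
    have h1 : p.map (θ.hom.app e) ≫ p.map (θ.inv.app e) = 𝟙 _ := by
      rw [← p.map_comp, Iso.hom_inv_id_app]; simp
    rw [hθ e] at h1
    calc p.map (θ.inv.app e)
        = eqToHom (Functor.congr_obj hs (p.obj e)).symm ≫
          (eqToHom (Functor.congr_obj hs (p.obj e)) ≫ p.map (θ.inv.app e)) := by simp
      _ = _ := by rw [h1]; simp
  refine ⟨{ obj := fun b' => ⟨s.obj (f.obj b'), b', Functor.congr_obj hs (f.obj b')⟩
            map := fun g => ⟨s.map (f.map g), g, by
              simpa using Functor.congr_hom hs (f.map g)⟩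
            map_id := fun b' => CatPullback.hom_ext (by simp) (by simp)
            map_comp := fun g h => CatPullback.hom_ext (by simp) (by simp) }, rfl, ?_⟩
  refine ⟨NatIso.ofComponents (fun X =>
    { hom := ⟨eqToHom (congrArg s.obj X.h.symm) ≫ θ.hom.app X.e, 𝟙 X.b', by
        rw [Functor.map_comp, hθ X.e, eqToHom_map]
        show _ = _ ≫ f.map (𝟙 X.b') ≫ _
        rw [f.map_id, Category.id_comp, eqToHom_trans]; exact (eqToHom_trans (C := B) _ _).symm⟩
      inv := ⟨θ.inv.app X.e ≫ eqToHom (congrArg s.obj X.h), 𝟙 X.b', by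
        rw [Functor.map_comp, hθinv X.e, eqToHom_map]
        show _ = _ ≫ f.map (𝟙 X.b') ≫ _
        rw [f.map_id, eqToHom_trans]
        exact (eqToHom_trans (C := B) _ _).symm.trans
          (congrArg (fun (k : f.obj X.b' ⟶ _) => eqToHom _ ≫ k) (Category.id_comp _).symm)⟩
      hom_inv_id := CatPullback.hom_ext (by simp) (by simp [CatPullback.proj])
      inv_hom_id := CatPullback.hom_ext (by simp) (by simp [CatPullback.proj]) }) ?_⟩
  intro X Y g
  refine CatPullback.hom_ext ?_ ?_
  · show s.map (f.map g.hb) ≫ eqToHom (congrArg s.obj Y.h.symm) ≫ θ.hom.app Y.e =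
      (eqToHom (congrArg s.obj X.h.symm) ≫ θ.hom.app X.e) ≫ g.he
    have hnat := θ.hom.naturality g.he
    simp only [Functor.comp_map, Functor.id_map] at hnat
    rw [Category.assoc, ← hnat, g.w]
    simp [eqToHom_map]
  · show g.hb ≫ 𝟙 Y.b' = 𝟙 X.b' ≫ g.hb
    simp
end

section
/- In any 2-category, equivalences are closed under retracts: if f : A → B is a retract of an equivalence g : C → D in the arrow category (i.e. there are 1-cells i : A → C, r : C → A with r∘i = 1_A, j : B → D, s : D → B with s∘j = 1_B, and g∘i = j∘f, f∘r = s∘g), then f is an equivalence. -/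
open CategoryTheory Bicategory

universe w v u

/-- A 1-cell in a bicategory is an equivalence if it admits a pseudo-inverse
up to invertible 2-cells. -/
def IsEquiv1Cell {K : Type u} [Bicategory.{w, v} K] {a b : K} (f : a ⟶ b) : Prop :=
  ∃ g : b ⟶ a, Nonempty (f ≫ g ≅ 𝟙 a) ∧ Nonempty (g ≫ f ≅ 𝟙 b)

/-- Equivalences in a bicategory are closed under (strict) retracts in the
arrow category: if `f : a ⟶ b` is a retract of an equivalence `g : c ⟶ d`,
then `f` is an equivalence. -/
theorem equivalences_closed_under_retracts {K : Type u} [Bicategory.{w, v} K]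
    {a b c d : K} (f : a ⟶ b) (g : c ⟶ d)
    (i : a ⟶ c) (r : c ⟶ a) (hir : i ≫ r = 𝟙 a)
    (j : b ⟶ d) (s : d ⟶ b) (hjs : j ≫ s = 𝟙 b)
    (hsq₁ : i ≫ g = f ≫ j) (hsq₂ : r ≫ f = g ≫ s)
    (hg : IsEquiv1Cell g) : IsEquiv1Cell f := by
  obtain ⟨h, ⟨η⟩, ⟨ε'⟩⟩ := hg
  refine ⟨j ≫ h ≫ r, ⟨?_⟩, ⟨?_⟩⟩
  · exact (α_ f j (h ≫ r)).symm ≪≫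
      eqToIso (by rw [← hsq₁]) ≪≫
      α_ i g (h ≫ r) ≪≫
      whiskerLeftIso i ((α_ g h r).symm ≪≫ whiskerRightIso η r ≪≫ λ_ r) ≪≫
      eqToIso hir
  · exact α_ j (h ≫ r) f ≪≫
      whiskerLeftIso j (α_ h r f ≪≫ whiskerLeftIso h (eqToIso hsq₂) ≪≫
        (α_ h g s).symm ≪≫ whiskerRightIso ε' s ≪≫ λ_ s) ≪≫
      eqToIso hjs
end
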